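/- Let V be a vertex algebra and M a subspace containing D(V). Then an element u belongs to the left-strong radical lsr_{0,-1}(M) if and only if it belongs to the right-strong radical rsr_{0,-1}(M). In particular lsr_{0,-1}(M) = rsr_{0,-1}(M) = sr_{0,-1}(M). -/

import Mathlib

open scoped BigOperators

noncomputable section

/-- The generalized binomial coefficient `p choose i` for `p : ℤ`, as a complex number. -/
def zchoose (p : ℤ) (i : ℕ) : ℂ :=
  (∏ j ∈ Finset.range i, ((p : ℂ) - (j : ℂ))) / (i.factorial : ℂ)

/-- A vertex algebra over `ℂ`: a bilinear system of modes `u ↦ u_n`, a vacuum vector `𝟙`,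
truncation, vacuum/creation axioms and the Borcherds (Jacobi) identity. -/
structure VertexAlgebra (V : Type) [AddCommGroup V] [Module ℂ V] where
  mode : V → ℤ → V → V
  one : V
  mode_add_left : ∀ (u v : V) (n : ℤ) (w : V), mode (u + v) n w = mode u n w + mode v n w
  mode_smul_left : ∀ (c : ℂ) (u : V) (n : ℤ) (w : V), mode (c • u) n w = c • mode u n w
  mode_add_right : ∀ (u : V) (n : ℤ) (v w : V), mode u n (v + w) = mode u n v + mode u n w
  mode_smul_right : ∀ (u : V) (n : ℤ) (c : ℂ) (v : V), mode u n (c • v) = c • mode u n v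
  trunc : ∀ u v : V, ∃ N : ℤ, ∀ n ≥ N, mode u n v = 0
  vacuum_left : ∀ (n : ℤ) (v : V), mode one n v = if n = -1 then v else 0
  creation_nonneg : ∀ (u : V) (n : ℤ), 0 ≤ n → mode u n one = 0
  creation : ∀ u : V, mode u (-1) one = u
  borcherds : ∀ (u v w : V) (p q r : ℤ),
    ∑ᶠ i : ℕ, zchoose p i • mode (mode u (r + i) v) (p + q - i) w =
      ∑ᶠ i : ℕ, ((-1 : ℂ) ^ i * zchoose r i) •
        (mode u (p + r - i) (mode v (q + i) w) -
          ((-1 : ℂ) ^ r) • mode v (q + r - i) (mode u (p + i) w))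

/-- A list of mode indices all equal to `0` or `-1`. -/
def GoodIdx (ns : List ℤ) : Prop := ∀ n ∈ ns, n = 0 ∨ n = -1

namespace VertexAlgebra

variable {V : Type} [AddCommGroup V] [Module ℂ V] (VA : VertexAlgebra V)

/-- The translation operator `𝒟 v = v_{-2} 𝟙`. -/
def D (v : V) : V := VA.mode v (-2) VA.one

/-- `C₂(V) = span_ℂ { u_{-2} v }`. -/
def C2 : Submodule ℂ V := Submodule.span ℂ {w : V | ∃ u v : V, w = VA.mode u (-2) v}

/-- `Cₙ(V) = span_ℂ { u_{-n} v }`. -/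
def Cn (n : ℕ) : Submodule ℂ V :=
  Submodule.span ℂ {w : V | ∃ u v : V, w = VA.mode u (-(n : ℤ)) v}


/-- The iterated word `a_{n₁} a_{n₂} ⋯ a_{n_t} a`. -/
def word (a : V) (ns : List ℤ) : V := ns.foldr (fun n acc => VA.mode a n acc) a

/-- The radical `r_{0,-1}(M)` of a subspace `M` with respect to the 0-th and (-1)-th products. -/
def rad (M : Set V) : Set V :=
  {v : V | ∃ m : ℕ, ∀ ns : List ℤ, GoodIdx ns → m ≤ ns.length → VA.word v ns ∈ M}

/-- The left-strong radical `lsr_{0,-1}(M)`. -/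
def lsrad (M : Set V) : Set V :=
  {v : V | ∀ b : V, ∃ m : ℕ, ∀ (ns : List ℤ) (s : ℤ), GoodIdx ns → m ≤ ns.length →
    (s = 0 ∨ s = -1) → VA.mode b s (VA.word v ns) ∈ M}

/-- The right-strong radical `rsr_{0,-1}(M)`. -/
def rsrad (M : Set V) : Set V :=
  {v : V | ∀ w : V, ∃ m : ℕ, ∀ (ns : List ℤ) (s : ℤ), GoodIdx ns → m ≤ ns.length →
    (s = 0 ∨ s = -1) → VA.mode (VA.word v ns) s w ∈ M}

/-- The strong radical `sr_{0,-1}(M) = lsr_{0,-1}(M) ∩ rsr_{0,-1}(M)`. -/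
def srad (M : Set V) : Set V := VA.lsrad M ∩ VA.rsrad M

/-- `M` is a Mathieu-Zhao subspace of `V` with respect to the 0-th and (-1)-th products. -/
def IsMZ (M : Set V) : Prop := VA.rad M = VA.srad M

/-- A (two-sided) ideal of a vertex algebra. -/
def IsIdeal (I : Submodule ℂ V) : Prop :=
  ∀ (v w : V) (n : ℤ), w ∈ I → VA.mode v n w ∈ I ∧ VA.mode w n v ∈ I

/-- `t`-th power of `a` under the (-1)-th product: `a_{-1}(a_{-1}(⋯ a))`, with `pow a 0 = 𝟙`. -/
def pow (a : V) (t : ℕ) : V :=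
  Nat.rec VA.one (fun _ acc => VA.mode a (-1) acc) t

end VertexAlgebra

/-- A homomorphism of vertex algebras: a linear map preserving all modes and the vacuum. -/
def VertexAlgebra.IsHom {V W : Type} [AddCommGroup V] [Module ℂ V] [AddCommGroup W]
    [Module ℂ W] (VA : VertexAlgebra V) (WA : VertexAlgebra W) (f : V →ₗ[ℂ] W) : Prop :=
  f VA.one = WA.one ∧ ∀ (u v : V) (n : ℤ), f (VA.mode u n v) = WA.mode (f u) n (f v)

/-- A vertex operator algebra: a `ℤ`-graded vertex algebra with finite-dimensional
pieces, grading bounded below, and a conformal vector `ω` whose modes `L(n) = ω_{n+1}`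
satisfy the Virasoro relations, give the grading by `L(0)`, and realize `L(-1) = 𝒟`. -/
structure VertexOperatorAlgebra (V : Type) [AddCommGroup V] [Module ℂ V]
    extends VertexAlgebra V where
  grade : ℤ → Submodule ℂ V
  internal : DirectSum.IsInternal grade
  one_mem : one ∈ grade 0
  mode_grade : ∀ {k m n : ℤ} {u w : V}, u ∈ grade k → w ∈ grade n →
    mode u m w ∈ grade (k + n - m - 1)
  fin_dim : ∀ n : ℤ, FiniteDimensional ℂ (grade n)
  bounded_below : ∃ n₀ : ℤ, ∀ n < n₀, grade n = ⊥
  omega : V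
  omega_mem : omega ∈ grade 2
  central_charge : ℂ
  virasoro : ∀ (m n : ℤ) (v : V),
    mode omega (m + 1) (mode omega (n + 1) v) - mode omega (n + 1) (mode omega (m + 1) v) =
      ((m : ℂ) - (n : ℂ)) • mode omega (m + n + 1) v +
        (if m + n = 0 then (((m : ℂ) ^ 3 - (m : ℂ)) / 12) * central_charge else 0) • v
  L0_grading : ∀ (n : ℤ) (v : V), v ∈ grade n → mode omega 1 v = (n : ℂ) • v
  L_neg1 : ∀ v : V, mode omega 0 v = mode v (-2) one

/-!
Borcherds' identity with `w = 𝟙` shows that `a_k 𝟙` is a multiple of `𝒟(a_{k+1} 𝟙)` for `k ≤ -2`,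
so every `a_k 𝟙` with `k ≤ -2` lies in `M`. Using this, the same identity with `p = q = -1` gives
skew-symmetry modulo `M`: `a_s b ≡ (-1)^{s+1} b_s a`. Hence `b_s x ∈ M ↔ x_s b ∈ M` for all `b, x`,
and applied to `x = v_{n₁} ⋯ v_{n_t} v` this identifies the two strong radicals.
-/

lemma zchoose_zero_right (p : ℤ) : zchoose p 0 = 1 := by simp [zchoose]

lemma zchoose_zero_left {i : ℕ} (hi : i ≠ 0) : zchoose 0 i = 0 := by
  rw [zchoose, Finset.prod_eq_zero (Finset.mem_range.mpr (Nat.pos_of_ne_zero hi)) (by simp),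
    zero_div]

lemma zchoose_one_right (p : ℤ) : zchoose p 1 = p := by simp [zchoose]

namespace VertexAlgebra

variable {V : Type} [AddCommGroup V] [Module ℂ V] (VA : VertexAlgebra V)

lemma mode_zero (u : V) (n : ℤ) : VA.mode u n 0 = 0 := by
  simpa using VA.mode_smul_right u n 0 0

/-- Borcherds' identity with `(p, q, r) = (0, -2, m)` and `v = w = 𝟙`. -/
lemma D_mode_one (a : V) (m : ℤ) :
    VA.D (VA.mode a m VA.one) = (-(m : ℂ)) • VA.mode a (m - 1) VA.one := by
  have h := VA.borcherds a VA.one VA.one 0 (-2) m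
  rw [finsum_eq_single _ 0 (fun j hj => by rw [zchoose_zero_left hj, zero_smul]),
    finsum_eq_single _ 1 (fun j hj => by
      rw [VA.vacuum_left, if_neg (by omega), VA.creation_nonneg a (0 + j) (by positivity),
        mode_zero, mode_zero, smul_zero, sub_zero, smul_zero])] at h
  rw [zchoose_zero_right, one_smul] at h
  norm_num at h
  rw [D, h, VA.vacuum_left, if_pos rfl, VA.creation_nonneg a 1 zero_le_one, mode_zero,
    smul_zero, sub_zero, zchoose_one_right, neg_smul]

variable {VA} {M : Submodule ℂ V}

lemma mode_one_mem_of_le (hD : ∀ v, VA.D v ∈ M) (a : V) {k : ℤ} (hk : k ≤ -2) :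
    VA.mode a k VA.one ∈ M := by
  have hmem := hD (VA.mode a (k + 1) VA.one)
  rw [D_mode_one, add_sub_cancel_right] at hmem
  have hne : (-((k + 1 : ℤ) : ℂ)) ≠ 0 := by
    rw [neg_ne_zero, Int.cast_ne_zero]
    omega
  exact (M.smul_mem_iff hne).mp hmem

/-- Skew-symmetry modulo `M`: Borcherds' identity with `p = q = -1` and `w = 𝟙`, whose left-hand
side consists of terms `x_k 𝟙` with `k ≤ -2`. -/
lemma mode_sub_neg_one_pow_smul_mode_mem (hD : ∀ v, VA.D v ∈ M) (u v : V) (r : ℤ) :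
    VA.mode u (r - 1) v - ((-1 : ℂ) ^ r) • VA.mode v (r - 1) u ∈ M := by
  have hmem : ∑ᶠ i : ℕ, zchoose (-1) i • VA.mode (VA.mode u (r + i) v) (-1 + -1 - i) VA.one ∈ M :=
    finsum_induction (· ∈ M) M.zero_mem (fun _ _ => M.add_mem)
      fun i => M.smul_mem _ (mode_one_mem_of_le hD _ (by omega))
  rw [VA.borcherds, finsum_eq_single _ 0 (fun j hj => by
    rw [VA.creation_nonneg v (-1 + j) (by omega), VA.creation_nonneg u (-1 + j) (by omega),
      mode_zero, mode_zero, smul_zero, sub_zero, smul_zero])] at hmem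
  simp only [Nat.cast_zero, add_zero, sub_zero, pow_zero, one_mul, zchoose_zero_right,
    one_smul, VA.creation] at hmem
  rwa [neg_add_eq_sub] at hmem

lemma mode_mem_iff_mode_swap_mem (hD : ∀ v, VA.D v ∈ M) (a b : V) (s : ℤ) :
    VA.mode a s b ∈ M ↔ VA.mode b s a ∈ M := by
  have hskew := mode_sub_neg_one_pow_smul_mode_mem hD a b (s + 1)
  rw [add_sub_cancel_right] at hskew
  rw [← M.sub_mem_iff_left hskew, sub_sub_cancel,
    M.smul_mem_iff (zpow_ne_zero _ (neg_ne_zero.mpr one_ne_zero))]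

lemma lsrad_eq_rsrad (hD : ∀ v, VA.D v ∈ M) : VA.lsrad (M : Set V) = VA.rsrad (M : Set V) := by
  ext u
  refine forall_congr' fun b => exists_congr fun m => forall₄_congr fun ns s _ _ => ?_
  exact imp_congr_right fun _ => mode_mem_iff_mode_swap_mem hD _ _ s

end VertexAlgebra

/-- If the subspace `M` contains `𝒟(V)`, then `u ∈ lsr_{0,-1}(M)` iff
`u ∈ rsr_{0,-1}(M)`; in particular `lsr_{0,-1}(M) = rsr_{0,-1}(M) = sr_{0,-1}(M)`. -/
theorem stmt5 {V : Type} [AddCommGroup V] [Module ℂ V] (VA : VertexAlgebra V)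
    (M : Submodule ℂ V) (hD : ∀ v : V, VA.D v ∈ M) :
    (∀ u : V, u ∈ VA.lsrad (M : Set V) ↔ u ∈ VA.rsrad (M : Set V)) ∧
    VA.lsrad (M : Set V) = VA.rsrad (M : Set V) ∧
    VA.lsrad (M : Set V) = VA.srad (M : Set V) ∧
    VA.rsrad (M : Set V) = VA.srad (M : Set V) := by
  have heq := VertexAlgebra.lsrad_eq_rsrad hD
  refine ⟨Set.ext_iff.mp heq, heq, ?_, ?_⟩ <;>
    simp only [VertexAlgebra.srad, heq, Set.inter_self]
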